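/- Let F have characteristic 0 and fix n₁ < n₂ ≤ n. With Δ̃ as above, for j₁ ∈ {n₁+1,...,n₂} and i₃ ∈ {n₁+1,...,n₂}, the operator x_{j₁}∂_{x_{i₃}} − y_{i₃}∂_{y_{j₁}} commutes with Δ̃ on F[x₁,...,xₙ,y₁,...,yₙ]. -/

import Mathlib

/-!
Write `D = x_j ∂_{x_i} − y_i ∂_{y_j}` with `i, j` in the middle block. The terms
`x_k ∂_{y_k}` (`k < n₁`) and `y_k ∂_{x_k}` (`k ≥ n₂`) of `Δ̃` involve no variable that `D`
multiplies by or differentiates in, so they commute with `D`. In the middle sum only `r = j`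
and `r = i` contribute, through the Weyl relation `∂_x x = x ∂_x + 1`:
`[∂_{x_j} ∂_{y_j}, x_j ∂_{x_i}] = ∂_{y_j} ∂_{x_i}` and
`[∂_{x_i} ∂_{y_i}, y_i ∂_{y_j}] = ∂_{x_i} ∂_{y_j}`,
and these cancel because partial derivatives commute.
-/

open MvPolynomial

namespace Stmt10

variable (F : Type*) [Field F] [CharZero F] (n n₁ n₂ : ℕ)

abbrev A := MvPolynomial (Fin n ⊕ Fin n) F

noncomputable def xv (i : Fin n) : A F n := X (Sum.inl i)
noncomputable def yv (i : Fin n) : A F n := X (Sum.inr i)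
noncomputable def mul (f : A F n) : Module.End F (A F n) := LinearMap.mulLeft F f
noncomputable def pdx (i : Fin n) : Module.End F (A F n) :=
  (pderiv (Sum.inl i : Fin n ⊕ Fin n)).toLinearMap
noncomputable def pdy (i : Fin n) : Module.End F (A F n) :=
  (pderiv (Sum.inr i : Fin n ⊕ Fin n)).toLinearMap

/-- The twisted Laplace operator
`Δ̃ = Σ_{i=1}^{n₁} x_i∂_{y_i} − Σ_{r=n₁+1}^{n₂} ∂_{x_r}∂_{y_r} + Σ_{s=n₂+1}^{n} y_s∂_{x_s}`
(indices 0-based). -/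
noncomputable def lap : Module.End F (A F n) :=
  (∑ i ∈ Finset.univ.filter (fun i : Fin n => (i : ℕ) < n₁),
      mul F n (xv F n i) * pdy F n i)
  - (∑ r ∈ Finset.univ.filter (fun r : Fin n => n₁ ≤ (r : ℕ) ∧ (r : ℕ) < n₂),
      pdx F n r * pdy F n r)
  + ∑ s ∈ Finset.univ.filter (fun s : Fin n => n₂ ≤ (s : ℕ)),
      mul F n (yv F n s) * pdx F n s

end Stmt10

namespace MvPolynomial

section WeylAlgebra

variable {σ R : Type*} [CommRing R]

theorem pderiv_pderiv_comm (i j : σ) (f : MvPolynomial σ R) :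
    pderiv i (pderiv j f) = pderiv j (pderiv i f) := by
  classical
  induction f using MvPolynomial.induction_on' with
  | add p q hp hq => simp only [map_add, hp, hq]
  | monomial s a =>
    by_cases h : i = j
    · rw [h]
    · simp only [pderiv_monomial]
      rw [tsub_right_comm]
      congr 1
      rw [Finsupp.tsub_apply, Finsupp.tsub_apply, Finsupp.single_eq_of_ne h,
        Finsupp.single_eq_of_ne (Ne.symm h)]
      simp only [tsub_zero]
      ring

theorem commute_pderiv_pderiv (i j : σ) :
    Commute (pderiv (R := R) i).toLinearMap (pderiv j).toLinearMap :=
  LinearMap.ext (pderiv_pderiv_comm i j)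

theorem commute_mulLeft_mulLeft (f g : MvPolynomial σ R) :
    Commute (LinearMap.mulLeft R f) (LinearMap.mulLeft R g) :=
  LinearMap.ext fun h => mul_left_comm f g h

theorem commute_pderiv_mulLeft_X {i j : σ} (h : j ≠ i) :
    Commute (pderiv (R := R) i).toLinearMap (LinearMap.mulLeft R (X j)) := by
  refine LinearMap.ext fun g => ?_
  simp [pderiv_X_of_ne h]

theorem commute_mulLeft_X_mul_pderiv {a b c d : σ} (had : a ≠ d) (hcb : c ≠ b) :
    Commute (LinearMap.mulLeft R (X a) * (pderiv b).toLinearMap)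
      (LinearMap.mulLeft R (X c) * (pderiv d).toLinearMap) :=
  .mul_left (.mul_right (commute_mulLeft_mulLeft _ _) (commute_pderiv_mulLeft_X had).symm)
    (.mul_right (commute_pderiv_mulLeft_X hcb) (commute_pderiv_pderiv b d))

theorem commute_pderiv_mul_pderiv_mulLeft_X_mul_pderiv {a b c d : σ} (hca : c ≠ a)
    (hcb : c ≠ b) :
    Commute ((pderiv (R := R) a).toLinearMap * (pderiv b).toLinearMap)
      (LinearMap.mulLeft R (X c) * (pderiv d).toLinearMap) :=
  .mul_left (.mul_right (commute_pderiv_mulLeft_X hca) (commute_pderiv_pderiv a d))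
    (.mul_right (commute_pderiv_mulLeft_X hcb) (commute_pderiv_pderiv b d))

theorem commutator_pderiv_mul_pderiv_mulLeft_X_mul_pderiv {a b : σ} (c : σ) (h : b ≠ a) :
    (pderiv (R := R) a).toLinearMap * (pderiv b).toLinearMap *
        (LinearMap.mulLeft R (X a) * (pderiv c).toLinearMap) -
      LinearMap.mulLeft R (X a) * (pderiv c).toLinearMap *
        ((pderiv a).toLinearMap * (pderiv b).toLinearMap) =
      (pderiv b).toLinearMap * (pderiv c).toLinearMap := by
  refine LinearMap.ext fun g => ?_
  have hcomm : pderiv a (pderiv b (pderiv c g)) = pderiv c (pderiv a (pderiv b g)) := by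
    rw [pderiv_pderiv_comm b c g, pderiv_pderiv_comm a c]
  simp [pderiv_X_of_ne h.symm, hcomm]

end WeylAlgebra

end MvPolynomial

namespace Stmt10

section Lemmas

variable {F : Type*} [Field F] {n : ℕ}

variable (F n) in
/-- The action of the elementary matrix `E_{ji} ∈ 𝔤𝔩ₙ`, with the `y` variables transforming
contragrediently: `x_j ∂_{x_i} − y_i ∂_{y_j}`. -/
noncomputable def glE (j i : Fin n) : Module.End F (A F n) :=
  mul F n (xv F n j) * pdx F n i - mul F n (yv F n i) * pdy F n j

theorem commute_pdx_pdy (i j : Fin n) : Commute (pdx F n i) (pdy F n j) :=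
  commute_pderiv_pderiv _ _

theorem commute_mul_xv_pdy_glE {k i : Fin n} (h : k ≠ i) (j : Fin n) :
    Commute (mul F n (xv F n k) * pdy F n k) (glE F n j i) :=
  .sub_right (commute_mulLeft_X_mul_pderiv (by simpa using h) (by simp))
    (commute_mulLeft_X_mul_pderiv (by simp) (by simpa using h.symm))

theorem commute_mul_yv_pdx_glE {k j : Fin n} (h : k ≠ j) (i : Fin n) :
    Commute (mul F n (yv F n k) * pdx F n k) (glE F n j i) :=
  .sub_right (commute_mulLeft_X_mul_pderiv (by simp) (by simpa using h.symm))
    (commute_mulLeft_X_mul_pderiv (by simpa using h) (by simp))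

theorem commute_sum_pdx_mul_pdy_glE {s : Finset (Fin n)} {j i : Fin n} (hj : j ∈ s)
    (hi : i ∈ s) : Commute (∑ r ∈ s, pdx F n r * pdy F n r) (glE F n j i) := by
  have hx : (∑ r ∈ s, pdx F n r * pdy F n r) * (mul F n (xv F n j) * pdx F n i) -
      mul F n (xv F n j) * pdx F n i * ∑ r ∈ s, pdx F n r * pdy F n r =
      pdy F n j * pdx F n i := by
    rw [Finset.sum_mul, Finset.mul_sum, ← Finset.sum_sub_distrib,
      Finset.sum_eq_single_of_mem j hj fun r _ hrj => ?_]
    · exact commutator_pderiv_mul_pderiv_mulLeft_X_mul_pderiv _ (by simp)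
    · exact sub_eq_zero.mpr (commute_pderiv_mul_pderiv_mulLeft_X_mul_pderiv
        (by simpa using hrj.symm) (by simp)).eq
  have hy : (∑ r ∈ s, pdx F n r * pdy F n r) * (mul F n (yv F n i) * pdy F n j) -
      mul F n (yv F n i) * pdy F n j * ∑ r ∈ s, pdx F n r * pdy F n r =
      pdx F n i * pdy F n j := by
    rw [Finset.sum_mul, Finset.mul_sum, ← Finset.sum_sub_distrib,
      Finset.sum_eq_single_of_mem i hi fun r _ hri => ?_]
    · rw [(commute_pdx_pdy i i).eq]
      exact commutator_pderiv_mul_pderiv_mulLeft_X_mul_pderiv _ (by simp)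
    · exact sub_eq_zero.mpr (commute_pderiv_mul_pderiv_mulLeft_X_mul_pderiv
        (by simp) (by simpa using hri.symm)).eq
  rw [commute_iff_eq, glE, mul_sub, sub_mul, ← sub_eq_zero, sub_sub_sub_comm, hx, hy,
    (commute_pdx_pdy i j).eq, sub_self]

end Lemmas

variable (F : Type*) [Field F] [CharZero F] (n n₁ n₂ : ℕ)

theorem lap_commutes_middle
    (j₁ i₃ : Fin n) (hj₁ : n₁ ≤ (j₁ : ℕ) ∧ (j₁ : ℕ) < n₂)
    (hi₃ : n₁ ≤ (i₃ : ℕ) ∧ (i₃ : ℕ) < n₂) :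
    lap F n n₁ n₂ * (mul F n (xv F n j₁) * pdx F n i₃ - mul F n (yv F n i₃) * pdy F n j₁) =
      (mul F n (xv F n j₁) * pdx F n i₃ - mul F n (yv F n i₃) * pdy F n j₁) *
        lap F n n₁ n₂ := by
  change Commute (lap F n n₁ n₂) (glE F n j₁ i₃)
  have low : Commute (∑ i ∈ Finset.univ.filter (fun i : Fin n => (i : ℕ) < n₁),
      mul F n (xv F n i) * pdy F n i) (glE F n j₁ i₃) :=
    .sum_left _ _ _ fun k hk =>
      commute_mul_xv_pdy_glE (Fin.ne_of_val_ne (by simp at hk; omega)) j₁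
  have mid : Commute
      (∑ r ∈ Finset.univ.filter (fun r : Fin n => n₁ ≤ (r : ℕ) ∧ (r : ℕ) < n₂),
        pdx F n r * pdy F n r) (glE F n j₁ i₃) :=
    commute_sum_pdx_mul_pdy_glE (by simpa using hj₁) (by simpa using hi₃)
  have high : Commute (∑ s ∈ Finset.univ.filter (fun s : Fin n => n₂ ≤ (s : ℕ)),
      mul F n (yv F n s) * pdx F n s) (glE F n j₁ i₃) :=
    .sum_left _ _ _ fun k hk =>
      commute_mul_yv_pdx_glE (Fin.ne_of_val_ne (by simp at hk; omega)) i₃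
  exact (low.sub_left mid).add_left high

end Stmt10
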